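/- Let X_1,…,X_n ∈ ℝ^d, let Y ∈ ℝ^n, let κ : ℝ^d × ℝ^d → ℝ be a symmetric kernel whose Gram matrix K = (κ(X_i,X_j))_{i,j∈[n]} is positive semidefinite, and let λ > 0. Let f̂(x) = k(x)ᵀ(K + λI)^{-1}Y with k(x) = (κ(x,X_1),…,κ(x,X_n))ᵀ, and let S = K(K + λI)^{-1} be the smoother matrix. Fix i ∈ [n] and let f̂_{−i} denote the KRR estimator (with the same kernel κ and parameter λ) fitted on the leave-one-out data {(X_j, Y_j)}_{j∈[n], j≠i}. Then S_{ii} ≠ 1 and Y_i − f̂_{−i}(X_i) = (Y_i − f̂(X_i)) / (1 − S_{ii}). -/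

import Mathlib

open Matrix

lemma smul_one_posDef' {m : Type*} [Fintype m] [DecidableEq m] {lam : ℝ} (hlam : 0 < lam) :
    (lam • (1 : Matrix m m ℝ)).PosDef := by
  rw [Matrix.smul_one_eq_diagonal]
  exact Matrix.posDef_diagonal_iff.2 fun _ => hlam

/-- Leave-one-out residual formula for kernel ridge regression. -/
theorem krr_loo_residual {d n : ℕ}
    (X : Fin n → Fin d → ℝ) (Y : Fin n → ℝ)
    (κ : (Fin d → ℝ) → (Fin d → ℝ) → ℝ)
    (hκ : ∀ x y, κ x y = κ y x)
    (lam : ℝ) (hlam : 0 < lam)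
    (K : Matrix (Fin n) (Fin n) ℝ)
    (hKdef : K = Matrix.of fun i j => κ (X i) (X j))
    (hK : K.PosSemidef)
    (kvec : (Fin d → ℝ) → Fin n → ℝ) (hkvec : ∀ x i, kvec x i = κ x (X i))
    (fhat : (Fin d → ℝ) → ℝ)
    (hfhat : ∀ x, fhat x = dotProduct (kvec x) ((K + lam • 1)⁻¹ *ᵥ Y))
    (S : Matrix (Fin n) (Fin n) ℝ) (hS : S = K * (K + lam • 1)⁻¹)
    (i : Fin n)
    (floo : (Fin d → ℝ) → ℝ)
    (hfloo : ∀ x, floo x =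
      dotProduct (fun a : {j : Fin n // j ≠ i} => κ x (X a.val))
        (((K.submatrix (fun a : {j : Fin n // j ≠ i} => a.val)
            (fun a : {j : Fin n // j ≠ i} => a.val) + lam • 1)⁻¹) *ᵥ
          (fun a : {j : Fin n // j ≠ i} => Y a.val))) :
    S i i ≠ 1 ∧ Y i - floo (X i) = (Y i - fhat (X i)) / (1 - S i i) := by
  classical
  have hKsym : ∀ a b, K a b = K b a := by
    intro a b; rw [hKdef]; exact hκ _ _
  set A : Matrix (Fin n) (Fin n) ℝ := K + lam • 1 with hAdef
  set B : Matrix {j : Fin n // j ≠ i} {j : Fin n // j ≠ i} ℝ :=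
    K.submatrix (fun a : {j : Fin n // j ≠ i} => a.val)
      (fun a : {j : Fin n // j ≠ i} => a.val) + lam • 1 with hBdef
  have hA : A.PosDef := Matrix.PosDef.posSemidef_add hK (smul_one_posDef' hlam)
  have hB : B.PosDef :=
    Matrix.PosDef.posSemidef_add (hK.submatrix _) (smul_one_posDef' hlam)
  have hAdet : IsUnit A.det := (Matrix.isUnit_iff_isUnit_det A).1 hA.isUnit
  have hBdet : IsUnit B.det := (Matrix.isUnit_iff_isUnit_det B).1 hB.isUnit
  set w : Fin n → ℝ := A⁻¹ *ᵥ Y with hw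
  set z : Fin n → ℝ := A⁻¹ *ᵥ (Pi.single i 1 : Fin n → ℝ) with hz
  have hAw : A *ᵥ w = Y := by
    rw [hw, Matrix.mulVec_mulVec, Matrix.mul_nonsing_inv _ hAdet, Matrix.one_mulVec]
  have hAz : A *ᵥ z = Pi.single i 1 := by
    rw [hz, Matrix.mulVec_mulVec, Matrix.mul_nonsing_inv _ hAdet, Matrix.one_mulVec]
  have hBinv : ∀ c : {j : Fin n // j ≠ i} → ℝ, B⁻¹ *ᵥ (B *ᵥ c) = c := by
    intro c
    rw [Matrix.mulVec_mulVec, Matrix.nonsing_inv_mul _ hBdet, Matrix.one_mulVec]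
  have hsplit : ∀ f : Fin n → ℝ,
      ∑ j, f j = f i + ∑ a : {j : Fin n // j ≠ i}, f a.val := by
    intro f
    rw [← Finset.sum_add_sum_compl {i} f]
    congr 1
    · simp
    · exact Finset.sum_subtype _ (by simp) _
  have hAB : ∀ a t : {j : Fin n // j ≠ i}, B a t = A a.val t.val := by
    intro a t
    simp only [hBdef, hAdef, Matrix.add_apply, Matrix.submatrix_apply, Matrix.smul_apply,
      Matrix.one_apply, smul_eq_mul, Subtype.ext_iff]
  have hAi : ∀ a : {j : Fin n // j ≠ i}, A a.val i = K a.val i := by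
    intro a
    simp [hAdef, Matrix.one_apply, a.prop]
  -- key row computation for rows ≠ i
  have key : ∀ c : Fin n → ℝ,
      B *ᵥ (fun t : {j : Fin n // j ≠ i} => c t.val) =
        fun a : {j : Fin n // j ≠ i} => (A *ᵥ c) a.val - K a.val i * c i := by
    intro c
    funext a
    have h1 : (A *ᵥ c) a.val = A a.val i * c i +
        ∑ t : {j : Fin n // j ≠ i}, A a.val t.val * c t.val := by
      simpa [Matrix.mulVec, dotProduct] using hsplit (fun k => A a.val k * c k)
    have h2 : (B *ᵥ fun t : {j : Fin n // j ≠ i} => c t.val) a =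
        ∑ t : {j : Fin n // j ≠ i}, A a.val t.val * c t.val := by
      simp [Matrix.mulVec, dotProduct, hAB]
    rw [h2, h1, hAi a]
    ring
  set b : {j : Fin n // j ≠ i} → ℝ := fun a => K a.val i with hb
  set u : {j : Fin n // j ≠ i} → ℝ := B⁻¹ *ᵥ (fun a => Y a.val) with hu
  set v : {j : Fin n // j ≠ i} → ℝ := B⁻¹ *ᵥ b with hv
  -- solve for the off-i parts of w and z
  have hw' : (fun t : {j : Fin n // j ≠ i} => w t.val) = u - w i • v := by
    have h := key w
    rw [hAw] at h
    have h2 := congrArg (fun t => B⁻¹ *ᵥ t) h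
    simp only [hBinv] at h2
    rw [h2, hu, hv]
    have : (fun a : {j : Fin n // j ≠ i} => Y a.val - K a.val i * w i) =
        (fun a : {j : Fin n // j ≠ i} => Y a.val) - w i • b := by
      funext a; simp [hb]; ring
    rw [this, Matrix.mulVec_sub, Matrix.mulVec_smul]
  have hz' : (fun t : {j : Fin n // j ≠ i} => z t.val) = -(z i • v) := by
    have h := key z
    rw [hAz] at h
    have h2 := congrArg (fun t => B⁻¹ *ᵥ t) h
    simp only [hBinv] at h2
    rw [h2, hv]
    have : (fun a : {j : Fin n // j ≠ i} => (Pi.single i 1 : Fin n → ℝ) a.val - K a.val i * z i) =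
        -(z i • b) := by
      funext a
      simp [hb, Pi.single_eq_of_ne a.prop]
      ring
    rw [this, Matrix.mulVec_neg, Matrix.mulVec_smul]
  -- row i equations
  have hrow : ∀ c : Fin n → ℝ, (A *ᵥ c) i = (K i i + lam) * c i +
      b ⬝ᵥ (fun t : {j : Fin n // j ≠ i} => c t.val) := by
    intro c
    have h1 : (A *ᵥ c) i = A i i * c i +
        ∑ t : {j : Fin n // j ≠ i}, A i t.val * c t.val := by
      simpa [Matrix.mulVec, dotProduct] using hsplit (fun k => A i k * c k)
    rw [h1]
    congr 1
    · simp [hAdef, Matrix.one_apply]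
    · simp only [dotProduct, hb]
      refine Finset.sum_congr rfl fun t _ => ?_
      rw [hKsym t.val i]
      congr 1
      simp [hAdef, Matrix.one_apply, Ne.symm t.prop]
  set s : ℝ := K i i + lam - b ⬝ᵥ v with hs
  have hrw : Y i = (K i i + lam) * w i + (b ⬝ᵥ u - w i * (b ⬝ᵥ v)) := by
    have := hrow w
    rw [hAw, hw'] at this
    rw [this, dotProduct_sub, dotProduct_smul]
    simp [smul_eq_mul]
  have hrz : (1:ℝ) = (K i i + lam) * z i - z i * (b ⬝ᵥ v) := by
    have := hrow z
    rw [hAz, hz'] at this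
    simpa [dotProduct_neg, dotProduct_smul, smul_eq_mul,
      Pi.single_eq_same, sub_eq_add_neg] using this
  have hzs : z i * s = 1 := by rw [hs]; linarith [hrz]; 
  have hzi : z i ≠ 0 := by
    intro h; rw [h, zero_mul] at hzs; exact one_ne_zero hzs.symm
  -- floo at X i
  have hflooi : floo (X i) = b ⬝ᵥ u := by
    rw [hfloo]
    congr 1
    funext a
    show κ (X i) (X a.val) = K a.val i
    rw [hKsym a.val i, hKdef]
    rfl
  have hres_loo : Y i - floo (X i) = w i * s := by
    rw [hflooi, hs]; linarith [hrw]
  -- fhat at X i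
  have hfhati : fhat (X i) = (K *ᵥ w) i := by
    rw [hfhat]
    simp only [Matrix.mulVec, dotProduct]
    refine Finset.sum_congr rfl fun j _ => ?_
    rw [hkvec, hKdef]
    rfl
  have hres : Y i - fhat (X i) = lam * w i := by
    have h1 : (A *ᵥ w) i = (K *ᵥ w) i + lam * w i := by
      rw [hAdef, Matrix.add_mulVec, Matrix.smul_mulVec, Matrix.one_mulVec]
      simp [smul_eq_mul]
    rw [hfhati, ← hAw, h1]; ring
  -- smoother diagonal
  have hzii : z i = A⁻¹ i i := by
    rw [hz, Matrix.mulVec_single]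
    simp
  have hSii : 1 - S i i = lam * z i := by
    have h1 : A * A⁻¹ = 1 := Matrix.mul_nonsing_inv _ hAdet
    have h2 : S + lam • A⁻¹ = 1 := by
      rw [hS, ← h1, hAdef, add_mul, Matrix.smul_mul, Matrix.one_mul]
    have h3 := congrArg (fun M => M i i) h2
    simp only [Matrix.add_apply, Matrix.smul_apply, Matrix.one_apply_eq, smul_eq_mul] at h3
    rw [hzii]; linarith
  have hSne : S i i ≠ 1 := by
    intro h
    rw [h, sub_self] at hSii
    exact hzi (by
      have := hSii.symm
      rcases mul_eq_zero.1 this with h' | h'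
      · exact absurd h' hlam.ne'
      · exact h')
  refine ⟨hSne, ?_⟩
  have hne : lam * z i ≠ 0 := mul_ne_zero hlam.ne' hzi
  rw [hres_loo, hres, hSii, eq_div_iff hne]
  calc w i * s * (lam * z i) = lam * w i * (z i * s) := by ring
    _ = lam * w i := by rw [hzs]; ring
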